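/- arXiv:1812.03561 — 6 statements merged into one kernel-verified Lean document; each statement's English description precedes it below -/
import Mathlib

section
/- Let X, Y, Z be real Banach spaces, let U be a nonempty open subset of X and V an open subset of Y. Suppose g : U → V is continuous, x ∈ U, v ∈ X, and g has a one-sided directional derivative g′₊(x,v) at x in the direction v (i.e., (g(x+tv) − g(x))/t converges as t → 0⁺). Suppose f : V → Z is Lipschitz on V. Then the derived set of f ∘ g at x in the direction v equals the derived set of f at g(x) in the direction g′₊(x,v): 𝒟(f∘g)(x,v) = 𝒟f(g(x), g′₊(x,v)). -/
open Filter Topology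

/-- The derived set of `f` at `y` in the direction `v`: all limits of difference quotients
`(f (y + tₙ • v) - f y) / tₙ` along sequences of positive reals `tₙ → 0`. -/
def dirDerivedSet {W Z : Type*} [NormedAddCommGroup W] [NormedSpace ℝ W]
    [NormedAddCommGroup Z] [NormedSpace ℝ Z] (f : W → Z) (y v : W) : Set Z :=
  {a | ∃ t : ℕ → ℝ, (∀ n, 0 < t n) ∧ Tendsto t atTop (𝓝 0) ∧
    Tendsto (fun n => (t n)⁻¹ • (f (y + t n • v) - f y)) atTop (𝓝 a)}

/-!
Along `t → 0⁺` the difference quotients of `f ∘ g` at `x` in direction `v` and of `f` at `g x`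
in direction `g'₊(x, v)` differ by `t⁻¹ • (f (g (x + t • v)) - f (g x + t • g'₊(x, v)))`.
Since `f` is `K`-Lipschitz, this is at most `K` times `‖t⁻¹ • (g (x + t • v) - g x) - g'₊(x, v)‖`,
which tends to `0`. Two families of difference quotients whose difference tends to `0` have the
same sequential limits, i.e. the same derived set.
-/

theorem IsOpen.eventually_add_smul_mem {𝕜 E : Type*} [NormedField 𝕜] [NormedAddCommGroup E]
    [NormedSpace 𝕜 E] {U : Set E} (hU : IsOpen U) {x : E} (hx : x ∈ U) (v : E) :
    ∀ᶠ t in 𝓝 (0 : 𝕜), x + t • v ∈ U :=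
  (Continuous.tendsto' (by fun_prop) 0 x (by simp)).eventually (hU.mem_nhds hx)

theorem LipschitzOnWith.tendsto_smul_sub_zero {𝕜 Y Z ι : Type*} [NormedField 𝕜]
    [NormedAddCommGroup Y] [NormedSpace 𝕜 Y] [NormedAddCommGroup Z] [NormedSpace 𝕜 Z]
    {K : NNReal} {f : Y → Z} {V : Set Y} (hf : LipschitzOnWith K f V) {l : Filter ι}
    {c : ι → 𝕜} {u w : ι → Y} (hu : ∀ᶠ i in l, u i ∈ V) (hw : ∀ᶠ i in l, w i ∈ V)
    (h : Tendsto (fun i => c i • (u i - w i)) l (𝓝 0)) :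
    Tendsto (fun i => c i • (f (u i) - f (w i))) l (𝓝 0) := by
  refine squeeze_zero_norm' ?_ (by simpa using h.norm.const_mul (K : ℝ))
  filter_upwards [hu, hw] with i hui hwi
  rw [norm_smul, norm_smul, mul_left_comm]
  exact mul_le_mul_of_nonneg_left (lipschitzOnWith_iff_norm_sub_le.1 hf hui hwi) (norm_nonneg _)

section DerivedSet

variable {W W' Z : Type*} [NormedAddCommGroup W] [NormedSpace ℝ W]
  [NormedAddCommGroup W'] [NormedSpace ℝ W'] [NormedAddCommGroup Z] [NormedSpace ℝ Z]
  {f : W → Z} {f' : W' → Z} {y v : W} {y' v' : W'}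

theorem dirDerivedSet_subset_of_tendsto (hy : f y = f' y')
    (h : Tendsto (fun t : ℝ => t⁻¹ • (f (y + t • v) - f' (y' + t • v'))) (𝓝[>] 0) (𝓝 0)) :
    dirDerivedSet f y v ⊆ dirDerivedSet f' y' v' := by
  rintro a ⟨t, htpos, ht0, hta⟩
  refine ⟨t, htpos, ht0, ?_⟩
  have ht : Tendsto t atTop (𝓝[>] 0) :=
    tendsto_nhdsWithin_of_tendsto_nhds_of_eventually_within t ht0 (.of_forall htpos)
  refine ((hta.sub (h.comp ht)).congr fun n => ?_).trans (by rw [sub_zero])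
  simp only [Function.comp, hy, ← smul_sub, sub_sub_sub_cancel_left]

theorem dirDerivedSet_eq_of_tendsto (hy : f y = f' y')
    (h : Tendsto (fun t : ℝ => t⁻¹ • (f (y + t • v) - f' (y' + t • v'))) (𝓝[>] 0) (𝓝 0)) :
    dirDerivedSet f y v = dirDerivedSet f' y' v' := by
  refine (dirDerivedSet_subset_of_tendsto hy h).antisymm
    (dirDerivedSet_subset_of_tendsto hy.symm ?_)
  simpa only [← smul_neg, neg_sub, neg_zero] using h.neg

end DerivedSet

theorem dirDerivedSet_comp_eq_general
    {X Y Z : Type*} [NormedAddCommGroup X] [NormedSpace ℝ X]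
    [NormedAddCommGroup Y] [NormedSpace ℝ Y]
    [NormedAddCommGroup Z] [NormedSpace ℝ Z]
    {U : Set X} {V : Set Y} (hU : IsOpen U) (hV : IsOpen V)
    (g : X → Y) (f : Y → Z)
    (hgUV : Set.MapsTo g U V)
    {x : X} (hx : x ∈ U) (v : X) (D : Y)
    (hD : Tendsto (fun t : ℝ => t⁻¹ • (g (x + t • v) - g x)) (𝓝[>] 0) (𝓝 D))
    {K : NNReal} (hf : LipschitzOnWith K f V) :
    dirDerivedSet (f ∘ g) x v = dirDerivedSet f (g x) D := by
  have hgU : ∀ᶠ t in 𝓝[>] (0 : ℝ), g (x + t • v) ∈ V :=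
    (eventually_nhdsWithin_of_eventually_nhds (hU.eventually_add_smul_mem hx v)).mono
      fun _ ht => hgUV ht
  have hgxD : ∀ᶠ t in 𝓝[>] (0 : ℝ), g x + t • D ∈ V :=
    eventually_nhdsWithin_of_eventually_nhds (hV.eventually_add_smul_mem (hgUV hx) D)
  have hremainder :
      Tendsto (fun t : ℝ => t⁻¹ • (g (x + t • v) - (g x + t • D))) (𝓝[>] 0) (𝓝 0) := by
    refine (tendsto_sub_nhds_zero_iff.2 hD).congr' ?_
    filter_upwards [self_mem_nhdsWithin] with t (ht : 0 < t)
    rw [sub_add_eq_sub_sub, smul_sub _ _ (t • D), inv_smul_smul₀ ht.ne']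
  exact dirDerivedSet_eq_of_tendsto rfl (hf.tendsto_smul_sub_zero hgU hgxD hremainder)

/-- Chain rule for derived sets (Maleva–Preiss): if `g` is continuous on `U` and has a
one-sided directional derivative `D` at `x` in direction `v`, and `f` is Lipschitz on `V`,
then `𝒟(f ∘ g)(x, v) = 𝒟 f(g x, D)`. -/
theorem dirDerivedSet_comp_eq
    {X Y Z : Type*} [NormedAddCommGroup X] [NormedSpace ℝ X] [CompleteSpace X]
    [NormedAddCommGroup Y] [NormedSpace ℝ Y] [CompleteSpace Y]
    [NormedAddCommGroup Z] [NormedSpace ℝ Z] [CompleteSpace Z]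
    {U : Set X} {V : Set Y} (hU : IsOpen U) (hUne : U.Nonempty) (hV : IsOpen V)
    (g : X → Y) (f : Y → Z)
    (hgc : ContinuousOn g U) (hgUV : Set.MapsTo g U V)
    {x : X} (hx : x ∈ U) (v : X) (D : Y)
    (hD : Tendsto (fun t : ℝ => t⁻¹ • (g (x + t • v) - g x)) (𝓝[>] 0) (𝓝 D))
    {K : NNReal} (hf : LipschitzOnWith K f V) :
    dirDerivedSet (f ∘ g) x v = dirDerivedSet f (g x) D :=
  dirDerivedSet_comp_eq_general hU hV g f hgUV hx v D hD hf
end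

section
/- Let X and Y be real Banach spaces, U ⊆ X and V ⊆ Y nonempty open subsets, and let g : U → V and f : V → U be inverse homeomorphisms. Let x ∈ U. Assume g has a Gâteaux derivative at x, i.e., there is a continuous linear map D : X → Y such that for every v ∈ X, (g(x+tv) − g(x))/t → D(v) as t → 0⁺, and assume f is Lipschitz on V. Then for every v ∈ X, the derived set of f at g(x) in the direction D(v) is the singleton {v}; that is, 𝒟f(g(x), D(v)) = {v}. -/
open Filter Topology

/-!
Write `y = g x` and `z = x + t • v`, so that `f y = x` and `f (g z) = z`. Then
`t⁻¹ • (f (y + t • D v) - f y) - v = t⁻¹ • (f (y + t • D v) - f (g z))`, and the Lipschitz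
bound on `f` makes its norm at most `K * ‖t⁻¹ • (g z - y) - D v‖`, which tends to `0` as
`t → 0⁺` by the Gâteaux differentiability of `g`. So the one-sided directional derivative of `f`
at `g x` in the direction `D v` exists and equals `v`, and every sequence `tₙ → 0⁺` sees this limit.
-/

section

variable {X Y : Type*} [NormedAddCommGroup X] [NormedSpace ℝ X]
  [NormedAddCommGroup Y] [NormedSpace ℝ Y]

theorem dirDerivedSet_eq_singleton_of_tendsto {f : X → Y} {y w : X} {a : Y}
    (h : Tendsto (fun t : ℝ => t⁻¹ • (f (y + t • w) - f y)) (𝓝[>] 0) (𝓝 a)) :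
    dirDerivedSet f y w = {a} := by
  ext b
  constructor
  · rintro ⟨t, ht_pos, ht_zero, hb⟩
    have ht : Tendsto t atTop (𝓝[>] 0) :=
      tendsto_nhdsWithin_iff.2 ⟨ht_zero, Eventually.of_forall ht_pos⟩
    exact tendsto_nhds_unique hb (h.comp ht)
  · rintro rfl
    have ht_zero : Tendsto (fun n : ℕ => ((n : ℝ) + 1)⁻¹) atTop (𝓝 0) := by
      simpa only [one_div] using tendsto_one_div_add_atTop_nhds_zero_nat (𝕜 := ℝ)
    have ht_pos (n : ℕ) : 0 < ((n : ℝ) + 1)⁻¹ := by positivity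
    exact ⟨_, ht_pos, ht_zero,
      h.comp (tendsto_nhdsWithin_iff.2 ⟨ht_zero, Eventually.of_forall ht_pos⟩)⟩

theorem tendsto_add_smul_nhdsGT_zero (x v : X) :
    Tendsto (fun t : ℝ => x + t • v) (𝓝[>] 0) (𝓝 x) :=
  ((by fun_prop : Continuous fun t : ℝ => x + t • v).tendsto' 0 x (by simp)).mono_left
    nhdsWithin_le_nhds

theorem inv_smul_sub_sub {t : ℝ} (ht : t ≠ 0) (a b c : X) :
    t⁻¹ • (a - b) - c = t⁻¹ • (a - (b + t • c)) := by
  rw [smul_sub, smul_sub, smul_add, inv_smul_smul₀ ht]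
  abel

theorem LipschitzOnWith.norm_inv_smul_sub_sub_le {f : Y → X} {V : Set Y} {K : NNReal}
    (hf : LipschitzOnWith K f V) {x v : X} {y y' w : Y} {t : ℝ} (ht : 0 < t)
    (hyw : y + t • w ∈ V) (hy' : y' ∈ V) (hfy : f y = x) (hfy' : f y' = x + t • v) :
    ‖t⁻¹ • (f (y + t • w) - f y) - v‖ ≤ K * ‖t⁻¹ • (y' - y) - w‖ :=
  calc ‖t⁻¹ • (f (y + t • w) - f y) - v‖ = t⁻¹ * ‖f (y + t • w) - f y'‖ := by
        rw [hfy, inv_smul_sub_sub ht.ne', ← hfy', norm_smul,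
          Real.norm_of_nonneg (inv_nonneg.2 ht.le)]
    _ ≤ t⁻¹ * (K * ‖y + t • w - y'‖) := by
        gcongr
        exact lipschitzOnWith_iff_norm_sub_le.1 hf hyw hy'
    _ = K * ‖t⁻¹ • (y' - y) - w‖ := by
        rw [inv_smul_sub_sub ht.ne', norm_smul, Real.norm_of_nonneg (inv_nonneg.2 ht.le),
          norm_sub_rev]
        ring

theorem LipschitzOnWith.tendsto_slope_of_leftInverse {g : X → Y} {f : Y → X} {V : Set Y}
    {K : NNReal} (hf : LipschitzOnWith K f V) {x v : X} {w : Y} (hV : V ∈ 𝓝 (g x))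
    (hfg : ∀ᶠ z in 𝓝 x, f (g z) = z) (hgV : ∀ᶠ z in 𝓝 x, g z ∈ V)
    (hg : Tendsto (fun t : ℝ => t⁻¹ • (g (x + t • v) - g x)) (𝓝[>] 0) (𝓝 w)) :
    Tendsto (fun t : ℝ => t⁻¹ • (f (g x + t • w) - f (g x))) (𝓝[>] 0) (𝓝 v) := by
  rw [tendsto_iff_norm_sub_tendsto_zero]
  have hbound : ∀ᶠ t : ℝ in 𝓝[>] 0,
      ‖t⁻¹ • (f (g x + t • w) - f (g x)) - v‖ ≤ K * ‖t⁻¹ • (g (x + t • v) - g x) - w‖ := by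
    filter_upwards [tendsto_add_smul_nhdsGT_zero x v hfg, tendsto_add_smul_nhdsGT_zero x v hgV,
      tendsto_add_smul_nhdsGT_zero (g x) w hV, self_mem_nhdsWithin] with t hft hgt hwt ht
    exact hf.norm_inv_smul_sub_sub_le ht hwt hgt hfg.self_of_nhds hft
  have hK : Tendsto (fun t : ℝ => (K : ℝ) * ‖t⁻¹ • (g (x + t • v) - g x) - w‖)
      (𝓝[>] 0) (𝓝 0) := by
    simpa using ((tendsto_iff_norm_sub_tendsto_zero.1 hg).const_mul (K : ℝ))
  exact squeeze_zero' (Eventually.of_forall fun _ => norm_nonneg _) hbound hK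

end

theorem dirDerivedSet_inverse_eq_singleton_general
    {X Y : Type*} [NormedAddCommGroup X] [NormedSpace ℝ X]
    [NormedAddCommGroup Y] [NormedSpace ℝ Y]
    {U : Set X} {V : Set Y} (hU : IsOpen U)
    (hV : IsOpen V)
    (g : X → Y) (f : Y → X)
    (hgUV : Set.MapsTo g U V)
    (hfg : ∀ x ∈ U, f (g x) = x)
    {x : X} (hx : x ∈ U) (D : X →L[ℝ] Y)
    (hD : ∀ v : X, Tendsto (fun t : ℝ => t⁻¹ • (g (x + t • v) - g x)) (𝓝[>] 0) (𝓝 (D v)))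
    {K : NNReal} (hf : LipschitzOnWith K f V) :
    ∀ v : X, dirDerivedSet f (g x) (D v) = {v} := by
  intro v
  have hUx : U ∈ 𝓝 x := hU.mem_nhds hx
  exact dirDerivedSet_eq_singleton_of_tendsto <|
    hf.tendsto_slope_of_leftInverse (hV.mem_nhds (hgUV hx)) (eventually_of_mem hUx hfg)
      (eventually_of_mem hUx hgUV) (hD v)

/-- If `g : U → V` and `f : V → U` are inverse homeomorphisms, `g` has a
Gâteaux derivative `D` at `x ∈ U`, and `f` is Lipschitz on `V`, then for every `v`,
`𝒟 f (g x, D v) = {v}`. -/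
theorem dirDerivedSet_inverse_eq_singleton
    {X Y : Type*} [NormedAddCommGroup X] [NormedSpace ℝ X] [CompleteSpace X]
    [NormedAddCommGroup Y] [NormedSpace ℝ Y] [CompleteSpace Y]
    {U : Set X} {V : Set Y} (hU : IsOpen U) (hUne : U.Nonempty)
    (hV : IsOpen V) (hVne : V.Nonempty)
    (g : X → Y) (f : Y → X)
    (hgc : ContinuousOn g U) (hfc : ContinuousOn f V)
    (hgUV : Set.MapsTo g U V) (hfVU : Set.MapsTo f V U)
    (hfg : ∀ x ∈ U, f (g x) = x) (hgf : ∀ y ∈ V, g (f y) = y)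
    {x : X} (hx : x ∈ U) (D : X →L[ℝ] Y)
    (hD : ∀ v : X, Tendsto (fun t : ℝ => t⁻¹ • (g (x + t • v) - g x)) (𝓝[>] 0) (𝓝 (D v)))
    {K : NNReal} (hf : LipschitzOnWith K f V) :
    ∀ v : X, dirDerivedSet f (g x) (D v) = {v} :=
  dirDerivedSet_inverse_eq_singleton_general hU hV g f hgUV hfg hx D hD hf
end

section
/- Let X and Y be real Banach spaces, U ⊆ X and V ⊆ Y nonempty open subsets, and let g : U → V and f : V → U be inverse homeomorphisms. Let x ∈ U. Assume g has a Gâteaux derivative D : X → Y at x (a continuous linear map with D(v) = lim_{t→0⁺}(g(x+tv) − g(x))/t for all v ∈ X), and assume f is Lipschitz on V. Then D is injective. -/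
/-! Since `f` undoes `g`, the Lipschitz bound on `f` gives `t ‖v‖ ≤ K ‖g (x + t v) - g x‖` for
small `t > 0`; dividing by `t` and letting `t → 0⁺` yields `‖v‖ ≤ K ‖D v‖`, so `D v = 0`
forces `v = 0`. -/

open Filter Topology

theorem LipschitzOnWith.dist_le_mul_dist_of_leftInvOn {α β : Type*} [PseudoMetricSpace α]
    [PseudoMetricSpace β] {f : β → α} {g : α → β} {K : NNReal} {U : Set α} {V : Set β}
    (hf : LipschitzOnWith K f V) (hgUV : Set.MapsTo g U V) (hfg : Set.LeftInvOn f g U)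
    {a b : α} (ha : a ∈ U) (hb : b ∈ U) :
    dist a b ≤ K * dist (g a) (g b) := by
  simpa only [hfg ha, hfg hb] using hf.dist_le_mul _ (hgUV ha) _ (hgUV hb)

theorem norm_le_mul_norm_of_tendsto_slope_of_leftInvOn {E F : Type*} [NormedAddCommGroup E]
    [NormedSpace ℝ E] [NormedAddCommGroup F] [NormedSpace ℝ F] {f : F → E} {g : E → F}
    {K : NNReal} {U : Set E} {V : Set F} (hf : LipschitzOnWith K f V)
    (hgUV : Set.MapsTo g U V) (hfg : Set.LeftInvOn f g U) {x : E} (hU : U ∈ 𝓝 x) {v : E} {w : F}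
    (hw : Tendsto (fun t : ℝ => t⁻¹ • (g (x + t • v) - g x)) (𝓝[>] 0) (𝓝 w)) :
    ‖v‖ ≤ K * ‖w‖ := by
  have hline : Tendsto (fun t : ℝ => x + t • v) (𝓝[>] 0) (𝓝 x) := by
    have : Continuous fun t : ℝ => x + t • v := by fun_prop
    simpa using (this.tendsto 0).mono_left nhdsWithin_le_nhds
  refine ge_of_tendsto (tendsto_const_nhds.mul hw.norm) ?_
  filter_upwards [hline.eventually_mem hU, self_mem_nhdsWithin] with t htU (ht : 0 < t)
  have hdist := hf.dist_le_mul_dist_of_leftInvOn hgUV hfg htU (mem_of_mem_nhds hU)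
  rw [dist_eq_norm, dist_eq_norm, add_sub_cancel_left, norm_smul, Real.norm_of_nonneg ht.le]
    at hdist
  calc ‖v‖ = t⁻¹ * (t * ‖v‖) := by field_simp
    _ ≤ t⁻¹ * (K * ‖g (x + t • v) - g x‖) := by gcongr
    _ = K * ‖t⁻¹ • (g (x + t • v) - g x)‖ := by
      rw [norm_smul, norm_inv, Real.norm_of_nonneg ht.le]; ring

theorem gateaux_deriv_injective_general
    {X Y : Type*} [NormedAddCommGroup X] [NormedSpace ℝ X]
    [NormedAddCommGroup Y] [NormedSpace ℝ Y]
    {U : Set X} {V : Set Y} (hU : IsOpen U)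
    (g : X → Y) (f : Y → X)
    (hgUV : Set.MapsTo g U V)
    (hfg : ∀ x ∈ U, f (g x) = x)
    {x : X} (hx : x ∈ U) (D : X →L[ℝ] Y)
    (hD : ∀ v : X, Tendsto (fun t : ℝ => t⁻¹ • (g (x + t • v) - g x)) (𝓝[>] 0) (𝓝 (D v)))
    {K : NNReal} (hf : LipschitzOnWith K f V) :
    Function.Injective D := by
  refine (injective_iff_map_eq_zero D).2 fun v hv => norm_le_zero_iff.1 ?_
  simpa [hv] using
    norm_le_mul_norm_of_tendsto_slope_of_leftInvOn hf hgUV hfg (hU.mem_nhds hx) (hD v)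

/-- If `g : U → V` and `f : V → U` are inverse homeomorphisms, `g` has a Gâteaux
derivative `D` at `x ∈ U`, and `f` is Lipschitz on `V`, then `D` is injective. -/
theorem gateaux_deriv_injective
    {X Y : Type*} [NormedAddCommGroup X] [NormedSpace ℝ X] [CompleteSpace X]
    [NormedAddCommGroup Y] [NormedSpace ℝ Y] [CompleteSpace Y]
    {U : Set X} {V : Set Y} (hU : IsOpen U) (hUne : U.Nonempty)
    (hV : IsOpen V) (hVne : V.Nonempty)
    (g : X → Y) (f : Y → X)
    (hgc : ContinuousOn g U) (hfc : ContinuousOn f V)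
    (hgUV : Set.MapsTo g U V) (hfVU : Set.MapsTo f V U)
    (hfg : ∀ x ∈ U, f (g x) = x) (hgf : ∀ y ∈ V, g (f y) = y)
    {x : X} (hx : x ∈ U) (D : X →L[ℝ] Y)
    (hD : ∀ v : X, Tendsto (fun t : ℝ => t⁻¹ • (g (x + t • v) - g x)) (𝓝[>] 0) (𝓝 (D v)))
    {K : NNReal} (hf : LipschitzOnWith K f V) :
    Function.Injective D :=
  gateaux_deriv_injective_general hU g f hgUV hfg hx D hD hf
end

section
/- (Converse of the inverse function theorem.) Let X and Y be real Banach spaces, U ⊆ X and V ⊆ Y nonempty open subsets, and let g : U → V and f : V → U be inverse homeomorphisms. Let x ∈ U. Assume g is Fréchet differentiable at x with Fréchet derivative dg_x : X → Y, and that f is Lipschitz on V. Then dg_x is a Banach space isomorphism from X onto Y; that is, dg_x is a bijective continuous linear map whose inverse is also continuous. -/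
open Filter Topology Asymptotics Set NNReal

/-!
Along the segment `t ↦ x + t • u`, the Lipschitz bound for `f = g⁻¹` gives
`‖t • u‖ ≤ K ‖g (x + t • u) - g x‖`; dividing by `‖t‖` and letting `t → 0` yields
`‖u‖ ≤ K ‖dg_x u‖`, so `dg_x` is injective with closed range. Pulling the segment
`t ↦ g x + t • v` back by `f` gives a curve through `x` of speed `O(t)`, and differentiability
of `g` along it shows `v = lim dg_x (t⁻¹ • (f (g x + t • v) - x))`. So the range is also dense,
hence all of `Y`, and the inverse of `dg_x` is bounded by `K`.
-/

section

variable {𝕜 E F : Type*} [NontriviallyNormedField 𝕜]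
  [NormedAddCommGroup E] [NormedSpace 𝕜 E] [NormedAddCommGroup F] [NormedSpace 𝕜 F]
  {g : E → F} {g' : E →L[𝕜] F} {x : E}

theorem HasFDerivAt.antilipschitzWith {K : ℝ≥0} (hg : HasFDerivAt g g' x)
    (hK : ∀ᶠ x' in 𝓝 x, ‖x' - x‖ ≤ K * ‖g x' - g x‖) : AntilipschitzWith K g' := by
  refine g'.antilipschitz_of_bound fun u => ?_
  have hline : HasDerivAt (fun t : 𝕜 => x + t • u) u 0 := by
    simpa using ((hasDerivAt_id (0 : 𝕜)).smul_const u).const_add x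
  have hslope := (hg.comp_hasDerivAt_of_eq (0 : 𝕜) hline (by simp)).tendsto_slope_zero
  simp only [zero_add, zero_smul, add_zero, Function.comp_def] at hslope
  have hline_to : Tendsto (fun t : 𝕜 => x + t • u) (𝓝[≠] 0) (𝓝 x) := by
    simpa using hline.continuousAt.tendsto.mono_left nhdsWithin_le_nhds
  refine ge_of_tendsto (hslope.norm.const_mul (K : ℝ)) ?_
  filter_upwards [hline_to.eventually hK, self_mem_nhdsWithin] with t ht (ht0 : t ≠ 0)
  rw [add_sub_cancel_left, norm_smul] at ht
  rwa [norm_smul, norm_inv, mul_left_comm, le_inv_mul_iff₀ (norm_pos_iff.2 ht0)]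

theorem HasFDerivAt.denseRange_of_rightInverse {f : F → E} {K : ℝ} (hg : HasFDerivAt g g' x)
    (hgf : ∀ᶠ y in 𝓝 (g x), g (f y) = y)
    (hf : ∀ᶠ y in 𝓝 (g x), ‖f y - x‖ ≤ K * ‖y - g x‖) : DenseRange g' := by
  intro v
  set φ : 𝕜 → E := fun t => f (g x + t • v)
  have hline : Tendsto (fun t : 𝕜 => g x + t • v) (𝓝 0) (𝓝 (g x)) := by
    have : Continuous fun t : 𝕜 => g x + t • v := by fun_prop
    simpa using this.tendsto 0
  have hφ : (fun t => φ t - x) =O[𝓝 0] fun t => t := by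
    refine IsBigO.of_bound (K * ‖v‖) ?_
    filter_upwards [hline.eventually hf] with t ht
    simpa [norm_smul, mul_comm, mul_left_comm, mul_assoc] using ht
  have hφx : Tendsto φ (𝓝 0) (𝓝 x) := by
    have := hφ.trans_tendsto (tendsto_id (x := 𝓝 (0:𝕜)))
    simpa using this.add_const x
  have hsmall : (fun t => t • v - g' (φ t - x)) =o[𝓝 0] fun t => t := by
    refine ((hg.isLittleO.comp_tendsto hφx).trans_isBigO hφ).congr' ?_ EventuallyEq.rfl
    filter_upwards [hline.eventually hgf] with t ht
    simp [φ, ht]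
  have hlim : Tendsto (fun t : 𝕜 => g' (t⁻¹ • (φ t - x))) (𝓝[≠] 0) (𝓝 v) := by
    have h0 : Tendsto (fun t : 𝕜 => v - g' (t⁻¹ • (φ t - x))) (𝓝[≠] 0) (𝓝 0) := by
      refine (hsmall.tendsto_inv_smul_nhds_zero.mono_left nhdsWithin_le_nhds).congr' ?_
      filter_upwards [self_mem_nhdsWithin] with t (ht : t ≠ 0)
      rw [smul_sub, smul_smul, inv_mul_cancel₀ ht, one_smul, map_smul]
    simpa only [sub_sub_cancel, sub_zero] using (tendsto_const_nhds (x := v)).sub h0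
  exact mem_closure_of_tendsto hlim (Eventually.of_forall fun t => mem_range_self _)

theorem AntilipschitzWith.exists_continuousLinearEquiv [CompleteSpace E] {K : ℝ≥0}
    (hK : AntilipschitzWith K g') (hdense : DenseRange g') :
    ∃ e : E ≃L[𝕜] F, (e : E → F) = g' := by
  have hsurj : Function.Surjective g' := by
    rw [← Set.range_eq_univ, ← (hK.isClosed_range g'.uniformContinuous).closure_eq]
    exact hdense.closure_range
  set e := LinearEquiv.ofBijective (g' : E →ₗ[𝕜] F) ⟨hK.injective, hsurj⟩
  refine ⟨e.toContinuousLinearEquivOfBounds ‖g'‖ K g'.le_opNorm fun y => ?_, rfl⟩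
  simpa only [show g' (e.symm y) = y from e.apply_symm_apply y] using
    g'.bound_of_antilipschitz hK (e.symm y)

end

theorem frechet_deriv_isomorphism_general
    {X Y : Type*} [NormedAddCommGroup X] [NormedSpace ℝ X] [CompleteSpace X]
    [NormedAddCommGroup Y] [NormedSpace ℝ Y]
    {U : Set X} {V : Set Y} (hU : IsOpen U)
    (hV : IsOpen V)
    (g : X → Y) (f : Y → X)
    (hgUV : Set.MapsTo g U V)
    (hfg : ∀ x ∈ U, f (g x) = x) (hgf : ∀ y ∈ V, g (f y) = y)
    {x : X} (hx : x ∈ U) (dgx : X →L[ℝ] Y) (hdgx : HasFDerivAt g dgx x)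
    {K : NNReal} (hf : LipschitzOnWith K f V) :
    ∃ e : X ≃L[ℝ] Y, (e : X → Y) = (dgx : X → Y) := by
  have hgx : g x ∈ V := hgUV hx
  have hanti : AntilipschitzWith K dgx := by
    refine hdgx.antilipschitzWith ?_
    filter_upwards [hU.mem_nhds hx] with x' hx'
    simpa only [hfg x' hx', hfg x hx, dist_eq_norm] using
      hf.dist_le_mul (g x') (hgUV hx') (g x) hgx
  have hdense : DenseRange dgx := by
    refine hdgx.denseRange_of_rightInverse (f := f) (K := K) ?_ ?_ <;>
      filter_upwards [hV.mem_nhds hgx] with y hy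
    · exact hgf y hy
    · simpa only [hfg x hx, dist_eq_norm] using hf.dist_le_mul y hy (g x) hgx
  exact hanti.exists_continuousLinearEquiv hdense

/-- Converse of the inverse function theorem: if `g : U → V` and `f : V → U` are inverse
homeomorphisms between open subsets of Banach spaces, `g` is Fréchet differentiable at
`x ∈ U` with derivative `dgx`, and `f` is Lipschitz on `V`, then `dgx` is a Banach space
isomorphism of `X` onto `Y` (a bijective continuous linear map with continuous inverse). -/
theorem frechet_deriv_isomorphism
    {X Y : Type*} [NormedAddCommGroup X] [NormedSpace ℝ X] [CompleteSpace X]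
    [NormedAddCommGroup Y] [NormedSpace ℝ Y] [CompleteSpace Y]
    {U : Set X} {V : Set Y} (hU : IsOpen U) (hUne : U.Nonempty)
    (hV : IsOpen V) (hVne : V.Nonempty)
    (g : X → Y) (f : Y → X)
    (hgc : ContinuousOn g U) (hfc : ContinuousOn f V)
    (hgUV : Set.MapsTo g U V) (hfVU : Set.MapsTo f V U)
    (hfg : ∀ x ∈ U, f (g x) = x) (hgf : ∀ y ∈ V, g (f y) = y)
    {x : X} (hx : x ∈ U) (dgx : X →L[ℝ] Y) (hdgx : HasFDerivAt g dgx x)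
    {K : NNReal} (hf : LipschitzOnWith K f V) :
    ∃ e : X ≃L[ℝ] Y, (e : X → Y) = (dgx : X → Y) :=
  frechet_deriv_isomorphism_general hU hV g f hgUV hfg hgf hx dgx hdgx hf
end

section
/- Let X and Y be real Banach spaces, U ⊆ X and V ⊆ Y nonempty open subsets, and let g : U → V and f : V → U be inverse homeomorphisms. Let x ∈ U and y = g(x). Assume g is Fréchet differentiable at x with Fréchet derivative dg_x and that f is Lipschitz on V with Lipschitz constant M_f > 0. Then for every w ∈ Y and every ε > 0 there exists t > 0 such that y + tw ∈ V and, with z_t = (f(y+tw) − f(y))/t, one has ‖w − dg_x(z_t)‖ ≤ 2ε; consequently w lies in the closure of the range of dg_x. -/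
open Filter Topology Asymptotics

/-!
Put `x_t = f (y + t • w)`, so that `g x_t = y + t • w`. Since `f` is Lipschitz,
`‖x_t - x‖ = O(t)`, hence Fréchet differentiability of `g` at `x` gives
`t • w - dg_x (x_t - x) = o(‖x_t - x‖) = o(t)`. Dividing by `t`, the vectors
`dg_x (t⁻¹ • (x_t - x))` of the range of `dg_x` converge to `w` as `t → 0`.
-/

theorem LipschitzOnWith.isBigO_sub {E F : Type*} [SeminormedAddCommGroup E]
    [SeminormedAddCommGroup F] {f : E → F} {K : NNReal} {s : Set E} {y : E}
    (hf : LipschitzOnWith K f s) (hs : s ∈ 𝓝 y) :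
    (fun z => f z - f y) =O[𝓝 y] (fun z => z - y) :=
  isBigO_iff.2 ⟨K, by
    filter_upwards [hs] with z hz using hf.norm_sub_le hz (mem_of_mem_nhds hs)⟩

theorem LipschitzOnWith.isBigO_sub_comp_add_smul {E F : Type*} [NormedAddCommGroup E]
    [NormedSpace ℝ E] [SeminormedAddCommGroup F] {f : E → F} {K : NNReal} {s : Set E}
    {y : E} (hf : LipschitzOnWith K f s) (hs : s ∈ 𝓝 y) (w : E) :
    (fun t : ℝ => f (y + t • w) - f y) =O[𝓝 0] (fun t => t) := by
  have hline : Tendsto (fun t : ℝ => y + t • w) (𝓝 0) (𝓝 y) :=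
    (by fun_prop : Continuous fun t : ℝ => y + t • w).tendsto' 0 y (by simp)
  refine ((hf.isBigO_sub hs).comp_tendsto hline).trans (isBigO_iff.2 ⟨‖w‖, ?_⟩)
  exact Eventually.of_forall fun t => by simp [norm_smul, mul_comm]

theorem HasFDerivAt.tendsto_of_comp_eq_add_smul {X Y : Type*} [NormedAddCommGroup X]
    [NormedSpace ℝ X] [NormedAddCommGroup Y] [NormedSpace ℝ Y] {g : X → Y} {dg : X →L[ℝ] Y}
    {x : X} (hg : HasFDerivAt g dg x) {γ : ℝ → X} {w : Y}
    (hγ : ∀ᶠ t in 𝓝[≠] 0, g (γ t) = g x + t • w)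
    (hO : (fun t => γ t - x) =O[𝓝[≠] 0] (fun t => t)) :
    Tendsto (fun t => dg (t⁻¹ • (γ t - x))) (𝓝[≠] 0) (𝓝 w) := by
  have hγx : Tendsto γ (𝓝[≠] 0) (𝓝 x) :=
    tendsto_sub_nhds_zero_iff.1 (hO.trans_tendsto (tendsto_id.mono_left nhdsWithin_le_nhds))
  have hrem : (fun t => t • w - dg (γ t - x)) =o[𝓝[≠] 0] (fun t => t) :=
    ((hg.isLittleO.comp_tendsto hγx).trans_isBigO hO).congr'
      (hγ.mono fun t ht => by simp [ht]) EventuallyEq.rfl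
  have hquot : ∀ᶠ t in 𝓝[≠] (0 : ℝ),
      w - t⁻¹ • (t • w - dg (γ t - x)) = dg (t⁻¹ • (γ t - x)) := by
    filter_upwards [self_mem_nhdsWithin] with t (ht : t ≠ 0)
    rw [smul_sub, smul_smul, inv_mul_cancel₀ ht, one_smul, map_smul, sub_sub_cancel]
  simpa using (tendsto_const_nhds.sub hrem.tendsto_inv_smul_nhds_zero).congr' hquot

theorem approx_in_range_of_frechet_general
    {X Y : Type*} [NormedAddCommGroup X] [NormedSpace ℝ X]
    [NormedAddCommGroup Y] [NormedSpace ℝ Y]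
    {U : Set X} {V : Set Y}
    (hV : IsOpen V)
    (g : X → Y) (f : Y → X)
    (hgUV : Set.MapsTo g U V)
    (hfg : ∀ x ∈ U, f (g x) = x) (hgf : ∀ y ∈ V, g (f y) = y)
    {x : X} (hx : x ∈ U) {y : Y} (hy : y = g x)
    (dgx : X →L[ℝ] Y) (hdgx : HasFDerivAt g dgx x)
    {Mf : NNReal} (hf : LipschitzOnWith Mf f V) :
    (∀ w : Y, ∀ ε > (0 : ℝ), ∃ t > (0 : ℝ), y + t • w ∈ V ∧
      ‖w - dgx (t⁻¹ • (f (y + t • w) - f y))‖ ≤ 2 * ε) ∧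
    ∀ w : Y, w ∈ closure (Set.range (dgx : X → Y)) := by
  have hVy : V ∈ 𝓝 y := hV.mem_nhds (hy ▸ hgUV hx)
  have hfy : f y = x := hy ▸ hfg x hx
  have hlineV (w : Y) : ∀ᶠ t in 𝓝 (0 : ℝ), y + t • w ∈ V :=
    (by fun_prop : Continuous fun t : ℝ => y + t • w).tendsto' 0 y (by simp) hVy
  have hlim (w : Y) :
      Tendsto (fun t : ℝ => dgx (t⁻¹ • (f (y + t • w) - f y))) (𝓝[≠] 0) (𝓝 w) := by
    rw [hfy]
    refine hdgx.tendsto_of_comp_eq_add_smul ?_ ?_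
    · filter_upwards [(hlineV w).filter_mono nhdsWithin_le_nhds] with t ht
      rw [hgf _ ht, hy]
    · simpa [hfy] using (hf.isBigO_sub_comp_add_smul hVy w).mono nhdsWithin_le_nhds
  refine ⟨fun w ε hε => ?_, fun w => mem_closure_of_tendsto (hlim w)
    (Eventually.of_forall fun _ => Set.mem_range_self _)⟩
  have hclose := (hlim w).mono_left (nhdsGT_le_nhdsNE 0)
    |>.eventually (Metric.ball_mem_nhds w hε)
  obtain ⟨t, ⟨htV, htε⟩, ht⟩ :=
    (((hlineV w).filter_mono nhdsWithin_le_nhds).and hclose |>.and self_mem_nhdsWithin).exists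
  refine ⟨t, ht, htV, ?_⟩
  rw [← dist_eq_norm, dist_comm]
  linarith [Metric.mem_ball.1 htε]

/-- If `g : U → V` and `f : V → U` are inverse homeomorphisms, `g` is Fréchet
differentiable at `x ∈ U` with derivative `dgx`, `y = g x`, and `f` is Lipschitz on `V`
with constant `M_f > 0`, then for every `w ∈ Y` and `ε > 0` there is `t > 0` with
`y + t • w ∈ V` and `‖w - dgx z_t‖ ≤ 2ε` where `z_t = (f (y + t • w) - f y) / t`;
consequently every `w` lies in the closure of the range of `dgx`. -/
theorem approx_in_range_of_frechet
    {X Y : Type*} [NormedAddCommGroup X] [NormedSpace ℝ X] [CompleteSpace X]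
    [NormedAddCommGroup Y] [NormedSpace ℝ Y] [CompleteSpace Y]
    {U : Set X} {V : Set Y} (hU : IsOpen U) (hUne : U.Nonempty)
    (hV : IsOpen V) (hVne : V.Nonempty)
    (g : X → Y) (f : Y → X)
    (hgc : ContinuousOn g U) (hfc : ContinuousOn f V)
    (hgUV : Set.MapsTo g U V) (hfVU : Set.MapsTo f V U)
    (hfg : ∀ x ∈ U, f (g x) = x) (hgf : ∀ y ∈ V, g (f y) = y)
    {x : X} (hx : x ∈ U) {y : Y} (hy : y = g x)
    (dgx : X →L[ℝ] Y) (hdgx : HasFDerivAt g dgx x)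
    {Mf : NNReal} (hMf : 0 < Mf) (hf : LipschitzOnWith Mf f V) :
    (∀ w : Y, ∀ ε > (0 : ℝ), ∃ t > (0 : ℝ), y + t • w ∈ V ∧
      ‖w - dgx (t⁻¹ • (f (y + t • w) - f y))‖ ≤ 2 * ε) ∧
    ∀ w : Y, w ∈ closure (Set.range (dgx : X → Y)) :=
  approx_in_range_of_frechet_general hV g f hgUV hfg hgf hx hy dgx hdgx hf
end

section
/- Let X and Y be real Banach spaces, U ⊆ X and V ⊆ Y nonempty open subsets, and let g : U → V and f : V → U be inverse homeomorphisms. Let x ∈ U and y = g(x). Assume g is Fréchet differentiable at x with Fréchet derivative dg_x : X → Y, and that f is Lipschitz on V with Lipschitz constant M_f. Then there exists a continuous linear map S : Y → X with operator norm ‖S‖ ≤ M_f such that S(dg_x(v)) = v for every v ∈ X; that is, dg_x admits a bounded linear left inverse of norm at most M_f. -/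
/-!
Composing the Lipschitz bound for `f` with `f ∘ g = id` gives `‖z - x‖ ≤ M_f ‖g z - g x‖`
near `x`; along rays `z = x + t v` this passes to the derivative, so `dg_x` is bounded below
by `M_f⁻¹` and, `X` being complete, has closed range. Running the same argument along the
rays `y + t w` through `f`, with `g ∘ f = id`, shows that `dg_x` maps `t⁻¹ (f (y + t w) - x)`
arbitrarily close to `w`, so the range is also dense. Thus `dg_x` is bijective, and its
inverse has norm `≤ M_f`.
-/

open Filter Topology Asymptotics
open scoped NNReal

section

variable {𝕜 E F : Type*} [NontriviallyNormedField 𝕜]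
  [NormedAddCommGroup E] [NormedSpace 𝕜 E] [NormedAddCommGroup F] [NormedSpace 𝕜 F]

theorem HasFDerivAt.antilipschitzWith_of_eventually_norm_sub_le {g : E → F} {g' : E →L[𝕜] F}
    {x : E} {K : ℝ≥0} (hg : HasFDerivAt g g' x)
    (hK : ∀ᶠ z in 𝓝 x, ‖z - x‖ ≤ K * ‖g z - g x‖) : AntilipschitzWith K g' := by
  refine g'.antilipschitz_of_bound fun v => ?_
  have hslope := (hg.hasLineDerivAt v).tendsto_slope_zero
  have hline : Tendsto (fun t : 𝕜 => x + t • v) (𝓝[≠] 0) (𝓝 x) := by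
    have : Continuous fun t : 𝕜 => x + t • v := by fun_prop
    simpa using this.continuousWithinAt.tendsto (x := 0) (s := {0}ᶜ)
  refine ge_of_tendsto (hslope.norm.const_mul (K : ℝ)) ?_
  filter_upwards [hline.eventually hK, self_mem_nhdsWithin] with t ht (ht0 : t ≠ 0)
  rw [add_sub_cancel_left, norm_smul] at ht
  rw [norm_smul, norm_inv, mul_left_comm, le_inv_mul_iff₀ (norm_pos_iff.mpr ht0)]
  exact ht

theorem HasFDerivAt.denseRange_of_eventually_rightInverse {g : E → F} {f : F → E}
    {g' : E →L[𝕜] F} {x : E} {K : ℝ≥0} (hg : HasFDerivAt g g' x)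
    (hf : ∀ᶠ y in 𝓝 (g x), ‖f y - x‖ ≤ K * ‖y - g x‖)
    (hgf : ∀ᶠ y in 𝓝 (g x), g (f y) = y) : DenseRange g' := by
  intro w
  set z : 𝕜 → E := fun t => f (g x + t • w)
  have hline : Tendsto (fun t : 𝕜 => g x + t • w) (𝓝 0) (𝓝 (g x)) := by
    have : Continuous fun t : 𝕜 => g x + t • w := by fun_prop
    simpa using this.tendsto 0
  have hzO : (fun t => z t - x) =O[𝓝 0] fun t => t := by
    refine IsBigO.of_bound (K * ‖w‖) ?_
    filter_upwards [hline.eventually hf] with t ht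
    simpa [norm_smul, mul_comm, mul_left_comm, mul_assoc] using ht
  have hz : Tendsto z (𝓝 0) (𝓝 x) :=
    tendsto_sub_nhds_zero_iff.mp (hzO.trans_tendsto tendsto_id)
  have hlo : (fun t => t • w - g' (z t - x)) =o[𝓝 0] fun t => t := by
    refine ((hg.isLittleO.comp_tendsto hz).trans_isBigO hzO).congr' ?_ EventuallyEq.rfl
    filter_upwards [hline.eventually hgf] with t ht
    simp only [Function.comp_apply, z, ht, add_sub_cancel_left]
  have hlim : Tendsto (fun t : 𝕜 => g' (t⁻¹ • (z t - x))) (𝓝[≠] 0) (𝓝 w) := by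
    have := (hlo.tendsto_inv_smul_nhds_zero.mono_left
      (nhdsWithin_le_nhds (s := {0}ᶜ))).const_sub w
    rw [sub_zero] at this
    refine this.congr' ?_
    filter_upwards [self_mem_nhdsWithin] with t (ht : t ≠ 0)
    rw [smul_sub, smul_smul, inv_mul_cancel₀ ht, one_smul, sub_sub_cancel, map_smul]
  exact mem_closure_of_tendsto hlim (Eventually.of_forall fun t => Set.mem_range_self _)

theorem ContinuousLinearMap.exists_leftInverse_opNorm_le_of_antilipschitz_of_surjective
    (L : E →L[𝕜] F) {K : ℝ≥0} (hL : AntilipschitzWith K L) (hsurj : Function.Surjective L) :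
    ∃ S : F →L[𝕜] E, ‖S‖ ≤ K ∧ ∀ v, S (L v) = v := by
  let e := LinearEquiv.ofBijective (L : E →ₗ[𝕜] F) ⟨hL.injective, hsurj⟩
  have hbound : ∀ w, ‖e.symm w‖ ≤ K * ‖w‖ := fun w => by
    have hw : L (e.symm w) = w := e.apply_symm_apply w
    simpa only [hw] using L.bound_of_antilipschitz hL (e.symm w)
  refine ⟨e.symm.toLinearMap.mkContinuous K hbound,
    LinearMap.mkContinuous_norm_le _ K.coe_nonneg _, fun v => ?_⟩
  exact e.symm_apply_apply v

end

theorem exists_left_inverse_of_frechet_general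
    {X Y : Type*} [NormedAddCommGroup X] [NormedSpace ℝ X] [CompleteSpace X]
    [NormedAddCommGroup Y] [NormedSpace ℝ Y]
    {U : Set X} {V : Set Y} (hU : IsOpen U) (hV : IsOpen V)
    (g : X → Y) (f : Y → X)
    (hgUV : Set.MapsTo g U V)
    (hfg : ∀ x ∈ U, f (g x) = x) (hgf : ∀ y ∈ V, g (f y) = y)
    {x : X} (hx : x ∈ U) (dgx : X →L[ℝ] Y) (hdgx : HasFDerivAt g dgx x)
    {Mf : NNReal} (hf : LipschitzOnWith Mf f V) :
    ∃ S : Y →L[ℝ] X, ‖S‖ ≤ Mf ∧ ∀ v : X, S (dgx v) = v := by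
  have hgx : g x ∈ V := hgUV hx
  have hbelow : ∀ᶠ z in 𝓝 x, ‖z - x‖ ≤ Mf * ‖g z - g x‖ := by
    filter_upwards [hU.mem_nhds hx] with z hz
    simpa only [hfg z hz, hfg x hx, dist_eq_norm] using hf.dist_le_mul _ (hgUV hz) _ hgx
  have habove : ∀ᶠ y in 𝓝 (g x), ‖f y - x‖ ≤ Mf * ‖y - g x‖ := by
    filter_upwards [hV.mem_nhds hgx] with y hy
    simpa only [hfg x hx, dist_eq_norm] using hf.dist_le_mul y hy _ hgx
  have hanti : AntilipschitzWith Mf dgx :=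
    hdgx.antilipschitzWith_of_eventually_norm_sub_le hbelow
  have hdense : DenseRange dgx :=
    hdgx.denseRange_of_eventually_rightInverse habove
      (eventually_of_mem (hV.mem_nhds hgx) hgf)
  have hsurj : Function.Surjective dgx := by
    rw [← Set.range_eq_univ, ← hdense.closure_range,
      (hanti.isClosed_range dgx.uniformContinuous).closure_eq]
  exact dgx.exists_leftInverse_opNorm_le_of_antilipschitz_of_surjective hanti hsurj

/-- If `g : U → V` and `f : V → U` are inverse homeomorphisms, `g` is Fréchet
differentiable at `x ∈ U` with derivative `dgx`, and `f` is Lipschitz on `V` with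
constant `M_f`, then `dgx` admits a bounded linear left inverse `S : Y → X` with
operator norm `‖S‖ ≤ M_f`. -/
theorem exists_left_inverse_of_frechet
    {X Y : Type*} [NormedAddCommGroup X] [NormedSpace ℝ X] [CompleteSpace X]
    [NormedAddCommGroup Y] [NormedSpace ℝ Y] [CompleteSpace Y]
    {U : Set X} {V : Set Y} (hU : IsOpen U) (hUne : U.Nonempty)
    (hV : IsOpen V) (hVne : V.Nonempty)
    (g : X → Y) (f : Y → X)
    (hgc : ContinuousOn g U) (hfc : ContinuousOn f V)
    (hgUV : Set.MapsTo g U V) (hfVU : Set.MapsTo f V U)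
    (hfg : ∀ x ∈ U, f (g x) = x) (hgf : ∀ y ∈ V, g (f y) = y)
    {x : X} (hx : x ∈ U) (dgx : X →L[ℝ] Y) (hdgx : HasFDerivAt g dgx x)
    {Mf : NNReal} (hf : LipschitzOnWith Mf f V) :
    ∃ S : Y →L[ℝ] X, ‖S‖ ≤ Mf ∧ ∀ v : X, S (dgx v) = v :=
  exists_left_inverse_of_frechet_general hU hV g f hgUV hfg hgf hx dgx hdgx hf
end
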